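/- arXiv:1606.04215 — 6 statements merged into one kernel-verified Lean document; each statement's English description precedes it below -/
import Mathlib

section
/- Fix T > 0, a ∈ ℝ, b < 0, and let u be a non-constant real T-periodic C² solution of u'' + a u + b u³ = 0 with u(0) = max u > 0. Then a > 0, 0 < |b| u(0)² < a, and there exist unique α > 0, β > 0, k ∈ (0,1) satisfying b β² = −2k² α² such that u(x) = (1/α) sn(K(k) + x/β, k). -/
/-!
At the maximum `u'(0) = 0` and `u''(0) = u(0) (|b| u(0)² - a) ≤ 0`; equality would make `u` the
constant solution `u(0)`, by uniqueness for the initial value problem. The rescaling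
`v ↦ c v(m x + q)` maps solutions of `v'' + A v + B v³ = 0` to solutions with coefficients
`(m² A, m² B / c²)`, so `(1/α) sn(K + x/β, k)` solves the equation of `u` exactly when
`β² a = 1 + k²` and `b β² = -2 k² α²`, and has the initial data of `u` exactly when `α u(0) = 1`.
These equations have a unique positive solution with `k < 1` because `|b| u(0)² < a`.
-/

open Set Filter Topology

theorem IsLocalMax.deriv_deriv_nonpos {f : ℝ → ℝ} {x₀ : ℝ} (h : IsLocalMax f x₀)
    (hc : ContinuousAt f x₀) : deriv (deriv f) x₀ ≤ 0 := by
  by_contra! hpos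
  have hmin : IsLocalMin f x₀ := isLocalMin_of_deriv_deriv_pos hpos h.deriv_eq_zero hc
  have hconst : f =ᶠ[𝓝 x₀] fun _ => f x₀ := (h.and hmin).mono fun _ hx => le_antisymm hx.1 hx.2
  have : deriv (deriv f) x₀ = 0 := by simp [hconst.deriv.deriv_eq]
  exact hpos.ne' this

theorem ODE_solution_unique_univ_of_contDiff {E : Type*} [NormedAddCommGroup E]
    [NormedSpace ℝ E] [ProperSpace E] {v : E → E} (hv : ContDiff ℝ 1 v) {f g : ℝ → E}
    (hf : ∀ t, HasDerivAt f (v (f t)) t) (hg : ∀ t, HasDerivAt g (v (g t)) t) {t₀ : ℝ}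
    (h₀ : f t₀ = g t₀) : f = g := by
  ext t
  obtain ⟨A, B, ht, ht₀⟩ : ∃ A B, t ∈ Ioo A B ∧ t₀ ∈ Ioo A B :=
    ⟨min t t₀ - 1, max t t₀ + 1, by grind, by grind⟩
  have hcpt : IsCompact (f '' Icc A B ∪ g '' Icc A B) :=
    (isCompact_Icc.image (continuous_iff_continuousAt.2 fun t => (hf t).continuousAt)).union
      (isCompact_Icc.image (continuous_iff_continuousAt.2 fun t => (hg t).continuousAt))
  obtain ⟨M, hM⟩ := hcpt.isBounded.subset_closedBall 0
  obtain ⟨L, hL⟩ := hv.contDiffOn.exists_lipschitzOnWith one_ne_zero (convex_closedBall 0 M)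
    (isCompact_closedBall 0 M)
  refine ODE_solution_unique_of_mem_Ioo (v := fun _ => v) (s := fun _ => Metric.closedBall 0 M)
    (fun _ _ => hL) ht₀ (fun s hs => ⟨hf s, hM ?_⟩) (fun s hs => ⟨hg s, hM ?_⟩) h₀ ht
  · exact .inl ⟨s, Ioo_subset_Icc_self hs, rfl⟩
  · exact .inr ⟨s, Ioo_subset_Icc_self hs, rfl⟩

theorem eq_of_deriv_deriv_eq_comp {F : ℝ → ℝ} (hF : ContDiff ℝ 1 F) {f g : ℝ → ℝ}
    (hf : ContDiff ℝ 2 f) (hg : ContDiff ℝ 2 g) (hf'' : ∀ x, deriv (deriv f) x = F (f x))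
    (hg'' : ∀ x, deriv (deriv g) x = F (g x)) {t₀ : ℝ} (h₀ : f t₀ = g t₀)
    (h₁ : deriv f t₀ = deriv g t₀) : f = g := by
  have hphase : ∀ {φ : ℝ → ℝ}, ContDiff ℝ 2 φ → (∀ x, deriv (deriv φ) x = F (φ x)) →
      ∀ t, HasDerivAt (fun t => (φ t, deriv φ t)) (deriv φ t, F (φ t)) t := fun hφ hφ'' t =>
    ((hφ.differentiable two_ne_zero t).hasDerivAt).prodMk
      (hφ'' t ▸ (hφ.differentiable_deriv_two t).hasDerivAt)
  have h := ODE_solution_unique_univ_of_contDiff (v := fun p : ℝ × ℝ => (p.2, F p.1))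
    (by fun_prop) (hphase hf hf'') (hphase hg hg'') (t₀ := t₀) (by rw [h₀, h₁])
  exact funext fun x => congrArg Prod.fst (congrFun h x)

theorem deriv_const_mul_comp_affine {u : ℝ → ℝ} (hu : Differentiable ℝ u) (c m q : ℝ) :
    deriv (fun x => c * u (m * x + q)) = fun x => c * m * deriv u (m * x + q) := by
  funext x
  have hlin : HasDerivAt (fun x => m * x + q) m x := by
    simpa using ((hasDerivAt_id x).const_mul m).add_const q
  exact ((((hu _).hasDerivAt.comp x hlin).const_mul c).congr_deriv (by ring)).deriv

def IsDuffingSolution (a b : ℝ) (u : ℝ → ℝ) : Prop :=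
  ContDiff ℝ 2 u ∧ ∀ x, deriv (deriv u) x + a * u x + b * u x ^ 3 = 0

namespace IsDuffingSolution

variable {a b : ℝ} {u v : ℝ → ℝ}

theorem const {c : ℝ} (h : a + b * c ^ 2 = 0) : IsDuffingSolution a b fun _ => c :=
  ⟨contDiff_const, fun _ => by simp only [deriv_const', zero_add]; linear_combination c * h⟩

theorem eq_of_deriv_eq (hu : IsDuffingSolution a b u) (hv : IsDuffingSolution a b v) {t₀ : ℝ}
    (h₀ : u t₀ = v t₀) (h₁ : deriv u t₀ = deriv v t₀) : u = v :=
  eq_of_deriv_deriv_eq_comp (F := fun y => -(a * y + b * y ^ 3)) (by fun_prop) hu.1 hv.1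
    (fun x => by linear_combination hu.2 x) (fun x => by linear_combination hv.2 x) h₀ h₁

theorem comp_affine (hu : IsDuffingSolution a b u) (c m q : ℝ) :
    IsDuffingSolution (m ^ 2 * a) (m ^ 2 * b / c ^ 2) fun x => c * u (m * x + q) := by
  refine ⟨contDiff_const.mul (hu.1.comp (by fun_prop)), fun x => ?_⟩
  rw [deriv_const_mul_comp_affine (hu.1.differentiable two_ne_zero),
    deriv_const_mul_comp_affine hu.1.differentiable_deriv_two]
  field_simp
  linear_combination c * m ^ 2 * hu.2 (m * x + q)

theorem eq_rescale_iff {A B : ℝ} (hu : IsDuffingSolution a b u) (hv : IsDuffingSolution A B v)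
    {x₁ : ℝ} (hv₁ : v x₁ = 1) (hv₁' : deriv v x₁ = 0) (hu₀ : u 0 ≠ 0) (hu₀' : deriv u 0 = 0)
    {α β : ℝ} (hα : α ≠ 0) (hβ : β ≠ 0) (hB : b * β ^ 2 = B * α ^ 2) :
    (∀ x, u x = 1 / α * v (x₁ + x / β)) ↔ α * u 0 = 1 ∧ β ^ 2 * a = A := by
  set w : ℝ → ℝ := fun x => 1 / α * v (β⁻¹ * x + x₁)
  have hw : IsDuffingSolution (β⁻¹ ^ 2 * A) b w := by
    convert hv.comp_affine (1 / α) β⁻¹ x₁ using 1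
    field_simp
    linear_combination hB
  have hw₀ : w 0 = 1 / α := by simp [w, hv₁]
  have hw₀' : deriv w 0 = 0 := by
    simp [w, deriv_const_mul_comp_affine (hv.1.differentiable two_ne_zero), hv₁']
  have hrepr : (∀ x, u x = 1 / α * v (x₁ + x / β)) ↔ u = w := by
    simp only [funext_iff, w, add_comm x₁, div_eq_inv_mul]
  rw [hrepr]
  constructor
  · rintro rfl
    refine ⟨by rw [hw₀]; field_simp, ?_⟩
    have hcoef : (a - β⁻¹ ^ 2 * A) * w 0 = 0 := by linear_combination hu.2 0 - hw.2 0
    have := (mul_eq_zero.1 hcoef).resolve_right hu₀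
    field_simp at this
    linarith
  · rintro ⟨h₀, ha⟩
    have ha' : β⁻¹ ^ 2 * A = a := by rw [← ha]; field_simp
    rw [ha'] at hw
    refine hu.eq_of_deriv_eq hw (t₀ := 0) ?_ (by rw [hu₀', hw₀'])
    rw [hw₀, eq_one_div_of_mul_eq_one_right h₀]

end IsDuffingSolution

theorem existsUnique_sn_params {a b u₀ : ℝ} (hu₀ : 0 < u₀) (hb : 0 < -b * u₀ ^ 2)
    (hba : -b * u₀ ^ 2 < a) :
    ∃! p : ℝ × ℝ × ℝ, 0 < p.1 ∧ 0 < p.2.1 ∧ p.2.2 ∈ Ioo (0 : ℝ) 1 ∧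
      b * p.2.1 ^ 2 = -(2 * p.2.2 ^ 2 * p.1 ^ 2) ∧ p.1 * u₀ = 1 ∧ p.2.1 ^ 2 * a = 1 + p.2.2 ^ 2 := by
  obtain ⟨D, hD_def⟩ : ∃ D, D = a + b * u₀ ^ 2 / 2 := ⟨_, rfl⟩
  have hD : 0 < D := by linarith
  have hsq : ∀ {α β k : ℝ}, b * β ^ 2 = -(2 * k ^ 2 * α ^ 2) → α * u₀ = 1 →
      β ^ 2 * a = 1 + k ^ 2 → β ^ 2 = 1 / D ∧ k ^ 2 = -b * u₀ ^ 2 / (2 * D) := by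
    intro α β k hc hα ha
    have hβ : β ^ 2 * D = 1 := by
      linear_combination ha + u₀ ^ 2 / 2 * hc - k ^ 2 * (α * u₀ + 1) * hα + β ^ 2 * hD_def
    refine ⟨eq_one_div_of_mul_eq_one_left hβ, ?_⟩
    rw [eq_div_iff (by positivity)]
    linear_combination D * u₀ ^ 2 * hc - 2 * k ^ 2 * D * (α * u₀ + 1) * hα - b * u₀ ^ 2 * hβ
  refine ⟨(1 / u₀, √(1 / D), √(-b * u₀ ^ 2 / (2 * D))), ?_, ?_⟩
  · have hβ : √(1 / D) ^ 2 = 1 / D := Real.sq_sqrt (by positivity)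
    have hk : √(-b * u₀ ^ 2 / (2 * D)) ^ 2 = -b * u₀ ^ 2 / (2 * D) := Real.sq_sqrt (by positivity)
    refine ⟨by positivity, by positivity, ⟨by positivity, ?_⟩, ?_, by field_simp, ?_⟩
    · rw [Real.sqrt_lt' one_pos, one_pow, div_lt_one (by positivity)]
      linarith
    · rw [hβ, hk]
      field_simp
    · rw [hβ, hk]
      field_simp
      linarith
  · rintro ⟨α, β, k⟩ ⟨hα, hβ, hk, hc, hαu, ha⟩
    obtain ⟨hβ', hk'⟩ := hsq hc hαu ha
    simp only [Prod.mk.injEq]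
    exact ⟨eq_one_div_of_mul_eq_one_left hαu, by rw [← hβ', Real.sqrt_sq hβ.le],
      by rw [← hk', Real.sqrt_sq hk.1.le]⟩

theorem stmt_6_general (a b : ℝ) (hb : b < 0)
    (sn : ℝ → ℝ → ℝ) (K : ℝ → ℝ)
    (hsn : ∀ k, 0 < k → k < 1 →
      ContDiff ℝ 2 (sn k) ∧
      (∀ x, deriv (deriv (sn k)) x + (1 + k^2) * sn k x - 2 * k^2 * (sn k x)^3 = 0) ∧
      sn k (K k) = 1 ∧ deriv (sn k) (K k) = 0)
    (u : ℝ → ℝ) (hu : ContDiff ℝ 2 u)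
    (hnc : ¬ ∃ c : ℝ, ∀ x, u x = c)
    (hode : ∀ x, deriv (deriv u) x + a * u x + b * (u x)^3 = 0)
    (hmax : ∀ x, u x ≤ u 0) (hpos : 0 < u 0) :
    0 < a ∧ 0 < |b| * (u 0)^2 ∧ |b| * (u 0)^2 < a ∧
    ∃! p : ℝ × ℝ × ℝ,
      0 < p.1 ∧ 0 < p.2.1 ∧ p.2.2 ∈ Set.Ioo (0:ℝ) 1 ∧
      b * p.2.1^2 = -(2 * p.2.2^2 * p.1^2) ∧
      ∀ x, u x = (1 / p.1) * sn p.2.2 (K p.2.2 + x / p.2.1) := by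
  rw [abs_of_neg hb]
  have hduff : IsDuffingSolution a b u := ⟨hu, hode⟩
  have hlocmax : IsLocalMax u 0 := Eventually.of_forall hmax
  have hu' : deriv u 0 = 0 := hlocmax.deriv_eq_zero
  have hle : -b * u 0 ^ 2 ≤ a := by
    have := hlocmax.deriv_deriv_nonpos hu.continuous.continuousAt
    nlinarith [hode 0]
  have hlt : -b * u 0 ^ 2 < a := hle.lt_of_ne fun heq => hnc ⟨u 0, congrFun
    (hduff.eq_of_deriv_eq (.const (c := u 0) (by linarith)) (t₀ := 0) rfl (by simpa using hu'))⟩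
  have hbu : 0 < -b * u 0 ^ 2 := mul_pos (neg_pos.2 hb) (by positivity)
  refine ⟨hbu.trans hlt, hbu, hlt, (existsUnique_congr fun p => ?_).1
    (existsUnique_sn_params hpos hbu hlt)⟩
  obtain ⟨α, β, k⟩ := p
  refine and_congr_right fun hα => and_congr_right fun hβ => and_congr_right fun hk =>
    and_congr_right fun hc => ?_
  obtain ⟨hsnC, hsnODE, hsnK, hsnK'⟩ := hsn k hk.1 hk.2
  have hsn_duff : IsDuffingSolution (1 + k ^ 2) (-(2 * k ^ 2)) (sn k) :=
    ⟨hsnC, fun x => by linear_combination hsnODE x⟩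
  exact (hduff.eq_rescale_iff hsn_duff hsnK hsnK'
    hpos.ne' hu' hα.ne' hβ.ne' (by linear_combination hc)).symm

/-- Classification of non-constant real periodic waves, defocusing case:
any such solution of `u'' + a u + b u³ = 0` (with `b < 0`) is a rescaled
snoidal function. Here `sn k` denotes the Jacobi elliptic sine of modulus `k`,
characterized as the solution of `v'' + (1+k²)v − 2k²v³ = 0` with
`v(K k) = 1`, `v'(K k) = 0`. -/
theorem stmt_6 (T a b : ℝ) (hT : 0 < T) (hb : b < 0)
    (sn : ℝ → ℝ → ℝ) (K : ℝ → ℝ)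
    (hsn : ∀ k, 0 < k → k < 1 →
      ContDiff ℝ 2 (sn k) ∧
      (∀ x, deriv (deriv (sn k)) x + (1 + k^2) * sn k x - 2 * k^2 * (sn k x)^3 = 0) ∧
      sn k (K k) = 1 ∧ deriv (sn k) (K k) = 0)
    (u : ℝ → ℝ) (hu : ContDiff ℝ 2 u)
    (hper : ∀ x, u (x + T) = u x)
    (hnc : ¬ ∃ c : ℝ, ∀ x, u x = c)
    (hode : ∀ x, deriv (deriv u) x + a * u x + b * (u x)^3 = 0)
    (hmax : ∀ x, u x ≤ u 0) (hpos : 0 < u 0) :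
    0 < a ∧ 0 < |b| * (u 0)^2 ∧ |b| * (u 0)^2 < a ∧
    ∃! p : ℝ × ℝ × ℝ,
      0 < p.1 ∧ 0 < p.2.1 ∧ p.2.2 ∈ Set.Ioo (0:ℝ) 1 ∧
      b * p.2.1^2 = -(2 * p.2.2^2 * p.1^2) ∧
      ∀ x, u x = (1 / p.1) * sn p.2.2 (K p.2.2 + x / p.2.1) :=
  stmt_6_general a b hb sn K hsn u hu hnc hode hmax hpos
end

section
/- Fix T > 0, a ∈ ℝ, b > 0, and let u be a non-constant real T-periodic C² solution of u'' + a u + b u³ = 0 with u(0) = max u > 0 and min u < 0. Then b·u(0)² > max(0, −2a), and there exist unique α > 0, β > 0, k ∈ (0,1) satisfying b β² = 2k² α² such that u(x) = (1/α) cn(x/β, k). -/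
/-!
The energy `u'² + a u² + (b/2) u⁴` is conserved, and since `b > 0` it confines every solution to a
bounded set on which the Duffing vector field is Lipschitz; hence a solution is determined by its
value and slope at one point. At a zero of `u` the slope cannot vanish (else `u ≡ 0`), so the energy
`a u(0)² + (b/2) u(0)⁴` read off at the maximum is positive: this is the inequality.

The rescaling `x ↦ c w(x/β)` turns solutions for the coefficients `(A, B)` into solutions for
`(A/β², B/(c²β²))`. Taking `w = cn k` and `c = u(0)`, the inequality is exactly what makes
`a β² = 1 - 2k²` and `b β² = 2k²/u(0)²` solvable with `k ∈ (0,1)`, and uniqueness of solutions gives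
the representation. Conversely, any representation forces `α u(0) = 1` and, comparing linear
coefficients, `a β² = 1 - 2k²`; together with `b β² = 2k²α²` this gives `β² (a + b u(0)²) = 1`,
which pins down `β` and then `k`.
-/

open Set

structure IsDuffingSolution_s7 (a b : ℝ) (u : ℝ → ℝ) : Prop where
  contDiff : ContDiff ℝ 2 u
  ode : ∀ x, deriv (deriv u) x + a * u x + b * u x ^ 3 = 0

noncomputable def duffingEnergy (a b : ℝ) (u : ℝ → ℝ) (x : ℝ) : ℝ :=
  deriv u x ^ 2 + a * u x ^ 2 + b / 2 * u x ^ 4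

def duffingField (a b : ℝ) (y : ℝ × ℝ) : ℝ × ℝ :=
  (y.2, -(a * y.1 + b * y.1 ^ 3))

lemma exists_abs_le_of_potential_le {b : ℝ} (hb : 0 < b) (a C : ℝ) :
    ∃ R, ∀ y : ℝ, a * y ^ 2 + b / 2 * y ^ 4 ≤ C → |y| ≤ R := by
  refine ⟨max 1 (2 * (|a| + |C|) / b), fun y hy => ?_⟩
  rcases le_or_gt |y| 1 with hy1 | hy1
  · exact hy1.trans (le_max_left _ _)
  refine le_max_of_le_right ((le_div_iff₀ hb).2 ?_)
  have habs : |y| ≤ y ^ 2 := by nlinarith [sq_abs y]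
  have hmul : b / 2 * y ^ 2 * y ^ 2 ≤ (|a| + |C|) * y ^ 2 := by
    nlinarith [neg_abs_le a, le_abs_self C, abs_nonneg C]
  have hquad : b / 2 * y ^ 2 ≤ |a| + |C| := le_of_mul_le_mul_right hmul (by nlinarith)
  nlinarith [mul_le_mul_of_nonneg_right habs hb.le]

lemma exists_lipschitzOnWith_duffingField (a b R : ℝ) :
    ∃ K, LipschitzOnWith K (duffingField a b) (Prod.fst ⁻¹' Icc (-R) R) := by
  obtain ⟨K, hK⟩ : ∃ K, LipschitzOnWith K (fun x : ℝ => -(a * x + b * x ^ 3)) (Icc (-R) R) :=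
    ContDiffOn.exists_lipschitzOnWith (n := 1) (by fun_prop) one_ne_zero (convex_Icc _ _)
      isCompact_Icc
  exact ⟨_, LipschitzWith.prod_snd.lipschitzOnWith.prodMk
    (hK.comp LipschitzWith.prod_fst.lipschitzOnWith (mapsTo_preimage _ _))⟩

lemma hasDerivAt_const_mul_comp_div {w : ℝ → ℝ} {w' : ℝ} (c β x : ℝ)
    (hw : HasDerivAt w w' (x / β)) : HasDerivAt (fun x => c * w (x / β)) (c / β * w') x :=
  ((hw.comp x ((hasDerivAt_id x).div_const β)).const_mul c).congr_deriv (by ring)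

namespace IsDuffingSolution_s7

variable {a b A B c β : ℝ} {u v w : ℝ → ℝ}

lemma differentiable (hu : IsDuffingSolution_s7 a b u) : Differentiable ℝ u :=
  hu.contDiff.differentiable two_ne_zero

lemma hasDerivAt_deriv (hu : IsDuffingSolution_s7 a b u) (x : ℝ) :
    HasDerivAt (deriv u) (-(a * u x + b * u x ^ 3)) x := by
  have hu' : ContDiff ℝ 1 (deriv u) := (hu.contDiff : ContDiff ℝ (1 + 1) u).deriv'
  rw [show -(a * u x + b * u x ^ 3) = deriv (deriv u) x by linarith [hu.ode x]]
  exact (hu'.differentiable one_ne_zero x).hasDerivAt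

lemma duffingEnergy_eq (hu : IsDuffingSolution_s7 a b u) (x y : ℝ) :
    duffingEnergy a b u x = duffingEnergy a b u y := by
  have hE (t : ℝ) : HasDerivAt (duffingEnergy a b u) 0 t := by
    have h₁ := (hu.differentiable t).hasDerivAt
    refine ((((hu.hasDerivAt_deriv t).pow 2).add ((h₁.pow 2).const_mul a)).add
      ((h₁.pow 4).const_mul (b / 2))).congr_deriv ?_
    push_cast
    ring
  exact is_const_of_deriv_eq_zero (fun t => (hE t).differentiableAt) (fun t => (hE t).deriv) x y

lemma exists_abs_le (hu : IsDuffingSolution_s7 a b u) (hb : 0 < b) : ∃ R, ∀ x, |u x| ≤ R := by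
  obtain ⟨R, hR⟩ := exists_abs_le_of_potential_le hb a (duffingEnergy a b u 0)
  refine ⟨R, fun x => hR _ ?_⟩
  rw [← hu.duffingEnergy_eq x 0, duffingEnergy]
  nlinarith [sq_nonneg (deriv u x)]

lemma hasDerivAt_prodMk_deriv (hu : IsDuffingSolution_s7 a b u) (t : ℝ) :
    HasDerivAt (fun t => (u t, deriv u t)) (duffingField a b (u t, deriv u t)) t :=
  (hu.differentiable t).hasDerivAt.prodMk (hu.hasDerivAt_deriv t)

theorem eq_of_eq_of_deriv_eq (hb : 0 < b) (hu : IsDuffingSolution_s7 a b u)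
    (hv : IsDuffingSolution_s7 a b v) (t₀ : ℝ) (h₀ : u t₀ = v t₀) (h₁ : deriv u t₀ = deriv v t₀) :
    u = v := by
  obtain ⟨Ru, hRu⟩ := hu.exists_abs_le hb
  obtain ⟨Rv, hRv⟩ := hv.exists_abs_le hb
  obtain ⟨K, hK⟩ := exists_lipschitzOnWith_duffingField a b (max Ru Rv)
  have hmem {w : ℝ → ℝ} {R : ℝ} (hw : ∀ x, |w x| ≤ R) (hR : R ≤ max Ru Rv) (t : ℝ) :
      (w t, deriv w t) ∈ Prod.fst ⁻¹' Icc (-max Ru Rv) (max Ru Rv) :=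
    abs_le.1 ((hw t).trans hR)
  have hphase := ODE_solution_unique_univ (fun _ => hK)
    (fun t => ⟨hu.hasDerivAt_prodMk_deriv t, hmem hRu (le_max_left _ _) t⟩)
    (fun t => ⟨hv.hasDerivAt_prodMk_deriv t, hmem hRv (le_max_right _ _) t⟩)
    (Prod.ext h₀ h₁)
  exact funext fun t => congrArg Prod.fst (congrFun hphase t)

lemma zero : IsDuffingSolution_s7 a b fun _ => 0 :=
  ⟨contDiff_const, fun x => by simp⟩

lemma comp_div (hw : IsDuffingSolution_s7 A B w) (hβ : β ≠ 0)
    (hA : A = a * β ^ 2) (hB : B = b * c ^ 2 * β ^ 2) :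
    IsDuffingSolution_s7 a b fun x => c * w (x / β) := by
  have hderiv : deriv (fun x => c * w (x / β)) = fun x => c / β * deriv w (x / β) :=
    funext fun x => (hasDerivAt_const_mul_comp_div c β x (hw.differentiable _).hasDerivAt).deriv
  have hw₂ := hw.contDiff
  refine ⟨by fun_prop, fun x => ?_⟩
  rw [hderiv, (hasDerivAt_const_mul_comp_div (c / β) β x (hw.hasDerivAt_deriv _)).deriv]
  subst hA hB
  field_simp
  ring

lemma coeff_eq_of_ne_zero {a' : ℝ} (hu : IsDuffingSolution_s7 a b u)
    (hu' : IsDuffingSolution_s7 a' b u) {x : ℝ} (hx : u x ≠ 0) : a = a' :=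
  mul_right_cancel₀ hx (by linear_combination hu.ode x - hu'.ode x)

lemma eq_const_mul_comp_div (hb : 0 < b) (hu : IsDuffingSolution_s7 a b u)
    (hw : IsDuffingSolution_s7 A B w) (hβ : β ≠ 0)
    (hA : A = a * β ^ 2) (hB : B = b * c ^ 2 * β ^ 2)
    (h₀ : u 0 = c * w 0) (h₀' : deriv u 0 = c / β * deriv w 0) :
    u = fun x => c * w (x / β) := by
  refine hu.eq_of_eq_of_deriv_eq hb (hw.comp_div hβ hA hB) 0 (by simpa using h₀) ?_
  rw [(hasDerivAt_const_mul_comp_div c β 0 (hw.differentiable _).hasDerivAt).deriv, zero_div, h₀']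

lemma linear_coeff_eq_of_eq_const_mul_comp_div (hu : IsDuffingSolution_s7 a b u)
    (hw : IsDuffingSolution_s7 A B w) (hβ : β ≠ 0) (hB : B = b * c ^ 2 * β ^ 2)
    (h₀ : u 0 ≠ 0) (hrepr : u = fun x => c * w (x / β)) : A = a * β ^ 2 := by
  have hu' : IsDuffingSolution_s7 (A / β ^ 2) b u := hrepr ▸ hw.comp_div hβ (by field_simp) hB
  rw [hu.coeff_eq_of_ne_zero hu' h₀]
  field_simp

lemma max_lt_mul_sq (hb : 0 < b) (hu : IsDuffingSolution_s7 a b u) {x₀ : ℝ}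
    (h₀ : u 0 ≠ 0) (h₀' : deriv u 0 = 0) (hx₀ : u x₀ = 0) :
    max 0 (-(2 * a)) < b * u 0 ^ 2 := by
  have hx₀' : deriv u x₀ ≠ 0 := fun h =>
    h₀ (congrFun (hu.eq_of_eq_of_deriv_eq hb zero x₀ hx₀ (by simpa using h)) 0)
  have hE := hu.duffingEnergy_eq x₀ 0
  simp only [duffingEnergy, hx₀, h₀'] at hE
  have hpos : 0 < u 0 ^ 2 * (2 * a + b * u 0 ^ 2) := by
    nlinarith [sq_pos_of_ne_zero hx₀']
  refine max_lt (by positivity) ?_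
  nlinarith [pos_of_mul_pos_right hpos (sq_nonneg _)]

end IsDuffingSolution_s7

lemma exists_cn_params {a b u₀ : ℝ} (h : max 0 (-(2 * a)) < b * u₀ ^ 2) :
    ∃ β k : ℝ, 0 < β ∧ 0 < k ∧ k < 1 ∧
      a * β ^ 2 = 1 - 2 * k ^ 2 ∧ b * β ^ 2 = 2 * k ^ 2 * (1 / u₀) ^ 2 := by
  obtain ⟨h₁, h₂⟩ := max_lt_iff.1 h
  have hu₀ : u₀ ≠ 0 := by rintro rfl; simp at h₁
  have hD : 0 < a + b * u₀ ^ 2 := by linarith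
  refine ⟨√(1 / (a + b * u₀ ^ 2)), √(b * u₀ ^ 2 / (2 * (a + b * u₀ ^ 2))),
    Real.sqrt_pos.2 (by positivity), Real.sqrt_pos.2 (by positivity), ?_, ?_, ?_⟩
  · rw [Real.sqrt_lt' one_pos, one_pow, div_lt_one (by positivity)]
    linarith
  · rw [Real.sq_sqrt (by positivity), Real.sq_sqrt (by positivity)]
    field_simp
    ring
  · rw [Real.sq_sqrt (by positivity), Real.sq_sqrt (by positivity)]
    field_simp

lemma cn_params_unique {a b u₀ α β k α' β' k' : ℝ} (hβ : 0 < β) (hβ' : 0 < β') (hk : 0 < k)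
    (hk' : 0 < k') (hα : α * u₀ = 1) (hα' : α' * u₀ = 1)
    (ha : a * β ^ 2 = 1 - 2 * k ^ 2) (ha' : a * β' ^ 2 = 1 - 2 * k' ^ 2)
    (hb : b * β ^ 2 = 2 * k ^ 2 * α ^ 2) (hb' : b * β' ^ 2 = 2 * k' ^ 2 * α' ^ 2) :
    (α, β, k) = (α', β', k') := by
  have hu₀ : u₀ ≠ 0 := right_ne_zero_of_mul_eq_one hα
  obtain rfl : α = α' := mul_right_cancel₀ hu₀ (hα.trans hα'.symm)
  have hD : β ^ 2 * (a + b * u₀ ^ 2) = 1 := by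
    linear_combination ha + u₀ ^ 2 * hb + 2 * k ^ 2 * (α * u₀ + 1) * hα
  have hD' : β' ^ 2 * (a + b * u₀ ^ 2) = 1 := by
    linear_combination ha' + u₀ ^ 2 * hb' + 2 * k' ^ 2 * (α * u₀ + 1) * hα
  obtain rfl : β = β' := (pow_left_inj₀ hβ.le hβ'.le two_ne_zero).1
    (mul_right_cancel₀ (right_ne_zero_of_mul_eq_one hD) (hD.trans hD'.symm))
  obtain rfl : k = k' := (pow_left_inj₀ hk.le hk'.le two_ne_zero).1 (by linarith)
  rfl

theorem stmt_7_general (a b : ℝ) (hb : 0 < b)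
    (cn : ℝ → ℝ → ℝ)
    (hcn : ∀ k, 0 < k → k < 1 →
      ContDiff ℝ 2 (cn k) ∧
      (∀ x, deriv (deriv (cn k)) x + (1 - 2 * k^2) * cn k x + 2 * k^2 * (cn k x)^3 = 0) ∧
      cn k 0 = 1 ∧ deriv (cn k) 0 = 0)
    (u : ℝ → ℝ) (hu : ContDiff ℝ 2 u)
    (hode : ∀ x, deriv (deriv u) x + a * u x + b * (u x)^3 = 0)
    (hmax : ∀ x, u x ≤ u 0) (hpos : 0 < u 0) (hneg : ∃ x, u x < 0) :
    max 0 (-(2 * a)) < b * (u 0)^2 ∧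
    ∃! p : ℝ × ℝ × ℝ,
      0 < p.1 ∧ 0 < p.2.1 ∧ p.2.2 ∈ Set.Ioo (0:ℝ) 1 ∧
      b * p.2.1^2 = 2 * p.2.2^2 * p.1^2 ∧
      ∀ x, u x = (1 / p.1) * cn p.2.2 (x / p.2.1) := by
  have hsol : IsDuffingSolution_s7 a b u := ⟨hu, hode⟩
  have hu'0 : deriv u 0 = 0 := IsLocalMax.deriv_eq_zero (.of_forall hmax)
  obtain ⟨x₁, hx₁⟩ := hneg
  obtain ⟨x₀, -, hx₀⟩ := intermediate_value_uIcc hu.continuous.continuousOn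
    (mem_uIcc.2 (Or.inr ⟨hx₁.le, hpos.le⟩))
  have hlt := hsol.max_lt_mul_sq hb hpos.ne' hu'0 hx₀
  refine ⟨hlt, ?_⟩
  obtain ⟨β, k, hβ, hk, hk1, ha, hbβ⟩ := exists_cn_params hlt
  obtain ⟨hcnC, hcnODE, hcn0, hcn'0⟩ := hcn k hk hk1
  have hrepr := hsol.eq_const_mul_comp_div (c := 1 / (1 / u 0)) hb ⟨hcnC, hcnODE⟩ hβ.ne'
    ha.symm (by field_simp at hbβ ⊢; linarith) (by simp [hcn0]) (by simp [hu'0, hcn'0])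
  refine ⟨(1 / u 0, β, k), ⟨by positivity, hβ, ⟨hk, hk1⟩, hbβ, congrFun hrepr⟩, ?_⟩
  rintro ⟨α', β', k'⟩ ⟨hα', hβ', ⟨hk', hk'1⟩, hb', hrepr'⟩
  obtain ⟨hcnC', hcnODE', hcn0', -⟩ := hcn k' hk' hk'1
  have ha' := hsol.linear_coeff_eq_of_eq_const_mul_comp_div (c := 1 / α') ⟨hcnC', hcnODE'⟩
    hβ'.ne' (by field_simp at hb' ⊢; linarith) hpos.ne' (funext hrepr')
  have hαu : α' * u 0 = 1 := by rw [hrepr' 0, zero_div, hcn0']; field_simp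
  exact (cn_params_unique (α := 1 / u 0) hβ hβ' hk hk' (by field_simp) hαu ha ha'.symm
    hbβ hb').symm

/-- Classification of sign-changing real periodic waves, focusing case:
any such solution of `u'' + a u + b u³ = 0` (with `b > 0`) is a rescaled
cnoidal function. Here `cn k` denotes the Jacobi elliptic cosine of modulus
`k`, characterized as the solution of `v'' + (1−2k²)v + 2k²v³ = 0` with
`v(0) = 1`, `v'(0) = 0`. -/
theorem stmt_7 (T a b : ℝ) (hT : 0 < T) (hb : 0 < b)
    (cn : ℝ → ℝ → ℝ)
    (hcn : ∀ k, 0 < k → k < 1 →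
      ContDiff ℝ 2 (cn k) ∧
      (∀ x, deriv (deriv (cn k)) x + (1 - 2 * k^2) * cn k x + 2 * k^2 * (cn k x)^3 = 0) ∧
      cn k 0 = 1 ∧ deriv (cn k) 0 = 0)
    (u : ℝ → ℝ) (hu : ContDiff ℝ 2 u)
    (hper : ∀ x, u (x + T) = u x)
    (hnc : ¬ ∃ c : ℝ, ∀ x, u x = c)
    (hode : ∀ x, deriv (deriv u) x + a * u x + b * (u x)^3 = 0)
    (hmax : ∀ x, u x ≤ u 0) (hpos : 0 < u 0) (hneg : ∃ x, u x < 0) :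
    max 0 (-(2 * a)) < b * (u 0)^2 ∧
    ∃! p : ℝ × ℝ × ℝ,
      0 < p.1 ∧ 0 < p.2.1 ∧ p.2.2 ∈ Set.Ioo (0:ℝ) 1 ∧
      b * p.2.1^2 = 2 * p.2.2^2 * p.1^2 ∧
      ∀ x, u x = (1 / p.1) * cn p.2.2 (x / p.2.1) :=
  stmt_7_general a b hb cn hcn u hu hode hmax hpos hneg
end

section
/- Let v be a T-anti-periodic function of class H¹_loc on ℝ (so its Fourier series on [0,2T] contains only odd frequency indices j, with coefficients v_j). Define ṽ by Fourier coefficients ṽ_j = √((|v_j|² + |v_{−j}|²)/2). Then ṽ is real-valued, ‖ṽ‖_{L²} = ‖v‖_{L²}, ‖∂_x ṽ‖_{L²} = ‖∂_x v‖_{L²}, and ‖ṽ‖_{L⁴} ≥ ‖v‖_{L⁴} (all norms over one period of length 2T). -/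
/-!
Write a function as `f = ∑ a_j e^{i j π x / T}` with absolutely summable coefficients. Then
`|f|² = ∑ A_n e^{i n π x / T}` where `A_n = ∑_k a_{n+k} conj(a_k)` is the autocorrelation of `a`,
and integrating over a period (orthogonality of the modes) gives Parseval's identity
`∫ |f|² = 2T ∑ |a_j|²` and, applied to `|f|²`, `∫ |f|⁴ = 2T ∑ |A_n|²`.

The rearranged coefficients `r_j` satisfy `r_j² + r_{-j}² = |c_j|² + |c_{-j}|²`; since the
weights `1` and `(jπ/T)²` are even in `j`, this gives the `L²` and `Ḣ¹` identities, and `r` is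
real and even, so `ṽ` is real. For the `L⁴` bound, the autocorrelations `C` of `c` and `R` of `r`
satisfy `|C_n| ≤ ∑_k |c_{n+k}| |c_k| ≤ ∑_k r_{n+k} r_k = R_n`: average the middle sum with its
reflection `k ↦ -n-k` and apply Cauchy–Schwarz to the pairs `(|c_j|, |c_{-j}|)`.
-/

open Real MeasureTheory

noncomputable section

namespace FourierRearrangement

lemma summable_norm_sq_of_summable_norm {ι E : Type*} [SeminormedAddCommGroup E] {a : ι → E}
    (ha : Summable (‖a ·‖)) : Summable (‖a ·‖ ^ 2) := by
  refine .of_nonneg_of_le (fun _ ↦ by positivity) (fun i ↦ ?_) (ha.mul_left (∑' i, ‖a i‖))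
  rw [sq]
  exact mul_le_mul_of_nonneg_right (ha.le_tsum i fun _ _ ↦ norm_nonneg _) (norm_nonneg _)

lemma tsum_eq_tsum_average {ι : Type*} {f : ι → ℝ} (σ : Equiv.Perm ι) (hf : Summable f) :
    ∑' i, f i = ∑' i, (f i + f (σ i)) / 2 := by
  rw [tsum_div_const, hf.tsum_add (g := fun i ↦ f (σ i)) (σ.summable_iff.2 hf), σ.tsum_eq]
  ring

def shear : ℤ × ℤ ≃ ℤ × ℤ where
  toFun p := (p.1 + p.2, p.2)
  invFun p := (p.1 - p.2, p.2)
  left_inv p := by simp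
  right_inv p := by simp

lemma summable_mul_shift {g : ℤ → ℝ} (hg : Summable g) (h0 : 0 ≤ g) :
    Summable fun p : ℤ × ℤ ↦ g (p.1 + p.2) * g p.2 :=
  shear.summable_iff.2 (hg.mul_of_nonneg hg h0 h0)

def mode (T : ℝ) (j : ℤ) (x : ℝ) : ℂ := Complex.exp (Complex.I * j * π * x / T)

section Mode

variable (T : ℝ)

lemma mode_eq_exp_ofReal_mul_I (j : ℤ) (x : ℝ) :
    mode T j x = Complex.exp ((j * π * x / T : ℝ) * Complex.I) := by
  unfold mode; push_cast; ring_nf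

@[simp] lemma norm_mode (j : ℤ) (x : ℝ) : ‖mode T j x‖ = 1 := by
  rw [mode_eq_exp_ofReal_mul_I]; exact Complex.norm_exp_ofReal_mul_I _

@[simp] lemma mode_zero (x : ℝ) : mode T 0 x = 1 := by simp [mode]

lemma star_mode (j : ℤ) (x : ℝ) : star (mode T j x) = mode T (-j) x := by
  simp only [mode_eq_exp_ofReal_mul_I, Complex.star_def, ← Complex.exp_conj, map_mul,
    Complex.conj_ofReal, Complex.conj_I]
  push_cast; ring_nf

lemma mode_mul_mode (j k : ℤ) (x : ℝ) : mode T j x * mode T k x = mode T (j + k) x := by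
  simp only [mode, ← Complex.exp_add]; push_cast; ring_nf

lemma mode_eq_exp_mul (j : ℤ) :
    mode T j = fun x : ℝ ↦ Complex.exp (Complex.I * j * π / T * x) := by
  ext x; unfold mode; ring_nf

lemma continuous_mode (j : ℤ) : Continuous (mode T j) := by
  rw [mode_eq_exp_mul]; fun_prop

lemma hasDerivAt_mode (j : ℤ) (x : ℝ) :
    HasDerivAt (mode T j) (Complex.I * j * π / T * mode T j x) x := by
  have := ((hasDerivAt_id (x : ℂ)).const_mul (Complex.I * j * π / T)).cexp.comp_ofReal
  rw [mode_eq_exp_mul]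
  convert this using 1
  · simp
  · simp [mul_comm]

lemma norm_I_mul_int_mul_pi_div (j : ℤ) : ‖Complex.I * j * π / T‖ = |(j : ℝ)| * π / |T| := by
  simp [abs_of_pos pi_pos]

lemma integral_mode {T : ℝ} (hT : T ≠ 0) (j : ℤ) :
    ∫ x in (0 : ℝ)..2 * T, mode T j x = if j = 0 then ((2 * T : ℝ) : ℂ) else 0 := by
  split_ifs with hj
  · simp [hj]
  have hκ : Complex.I * j * π / T ≠ 0 := by simp [hj, hT, pi_ne_zero]
  have hperiod : Complex.I * j * π / T * ((2 * T : ℝ) : ℂ) = j * (2 * π * Complex.I) := by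
    push_cast; field_simp [show (T : ℂ) ≠ 0 by exact_mod_cast hT]
  rw [mode_eq_exp_mul, integral_exp_mul_complex hκ, hperiod, Complex.exp_int_mul_two_pi_mul_I]
  simp

end Mode

def series (T : ℝ) (a : ℤ → ℂ) (x : ℝ) : ℂ := ∑' j, a j * mode T j x

def autocorr (a : ℤ → ℂ) (n : ℤ) : ℂ := ∑' k, a (n + k) * star (a k)

section Series

variable {T : ℝ} {a : ℤ → ℂ}

lemma summable_mul_mode (ha : Summable (‖a ·‖)) (x : ℝ) :
    Summable fun j ↦ a j * mode T j x :=
  .of_norm (by simpa using ha)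

lemma star_series (x : ℝ) : star (series T a x) = series T (fun j ↦ star (a (-j))) x := by
  rw [series, tsum_star, ← (Equiv.neg ℤ).tsum_eq]
  simp [series, star_mode]

lemma summable_norm_autocorr_term (ha : Summable (‖a ·‖)) :
    Summable fun p : ℤ × ℤ ↦ ‖a (p.1 + p.2) * star (a p.2)‖ := by
  simpa using summable_mul_shift ha fun _ ↦ norm_nonneg _

lemma norm_autocorr_le_tsum (ha : Summable (‖a ·‖)) (n : ℤ) :
    ‖autocorr a n‖ ≤ ∑' k, ‖a (n + k)‖ * ‖a k‖ := by
  refine (norm_tsum_le_tsum_norm ((summable_norm_autocorr_term ha).prod_factor n)).trans_eq ?_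
  simp

lemma summable_norm_autocorr (ha : Summable (‖a ·‖)) : Summable (‖autocorr a ·‖) :=
  .of_nonneg_of_le (fun _ ↦ norm_nonneg _) (norm_autocorr_le_tsum ha)
    (summable_mul_shift ha fun _ ↦ norm_nonneg _).prod

lemma autocorr_zero : autocorr a 0 = ∑' k, ((‖a k‖ ^ 2 : ℝ) : ℂ) := by
  simp [autocorr, Complex.mul_conj']

lemma series_mul_star (ha : Summable (‖a ·‖)) (x : ℝ) :
    series T a x * star (series T a x) = series T (autocorr a) x := by
  have hstar : Summable fun j ↦ ‖star (a j * mode T j x)‖ := by simpa using ha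
  have hs : Summable fun p : ℤ × ℤ ↦ a (p.1 + p.2) * star (a p.2) * mode T p.1 x :=
    .of_norm (by simpa using summable_norm_autocorr_term ha)
  calc series T a x * star (series T a x)
      = ∑' p : ℤ × ℤ, a (p.1 + p.2) * star (a p.2) * mode T p.1 x := by
        rw [series, tsum_star, tsum_mul_tsum_of_summable_norm (by simpa using ha) hstar,
          ← shear.tsum_eq]
        refine tsum_congr fun p ↦ ?_
        have hmode := mode_mul_mode T (p.1 + p.2) (-p.2) x
        rw [add_neg_cancel_right] at hmode
        simp only [shear, Equiv.coe_fn_mk, star_mul', star_mode]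
        linear_combination a (p.1 + p.2) * star (a p.2) * hmode
    _ = ∑' n, ∑' k, a (n + k) * star (a k) * mode T n x := hs.tsum_prod' hs.prod_factor
    _ = series T (autocorr a) x := tsum_congr fun n ↦ tsum_mul_right

lemma integral_series (hT : T ≠ 0) (ha : Summable (‖a ·‖)) :
    ∫ x in (0 : ℝ)..2 * T, series T a x = 2 * T * a 0 := by
  have hsum := intervalIntegral.hasSum_integral_of_dominated_convergence
    (μ := volume) (a := 0) (b := 2 * T) (F := fun j x ↦ a j * mode T j x) (fun j _ ↦ ‖a j‖)
    (fun j ↦ ((continuous_mode T j).const_mul _).aestronglyMeasurable)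
    (fun j ↦ .of_forall fun x _ ↦ by simp) (.of_forall fun _ _ ↦ ha)
    intervalIntegrable_const (.of_forall fun x _ ↦ (summable_mul_mode ha x).hasSum)
  have hsingle : HasSum (fun j ↦ ∫ x in (0 : ℝ)..2 * T, a j * mode T j x) (2 * T * a 0) := by
    have hvanish (j : ℤ) (hj : j ≠ 0) : ∫ x in (0 : ℝ)..2 * T, a j * mode T j x = 0 := by
      simp [integral_mode hT, hj]
    convert hasSum_single 0 hvanish using 1
    simp
  exact hsum.unique hsingle

lemma integral_norm_sq_series (hT : T ≠ 0) (ha : Summable (‖a ·‖)) :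
    ∫ x in (0 : ℝ)..2 * T, ‖series T a x‖ ^ 2 = 2 * T * ∑' j, ‖a j‖ ^ 2 := by
  have hsq_eq (x : ℝ) : ((‖series T a x‖ ^ 2 : ℝ) : ℂ) = series T (autocorr a) x := by
    rw [← series_mul_star ha, Complex.star_def, Complex.mul_conj', Complex.ofReal_pow]
  apply Complex.ofReal_injective
  rw [← intervalIntegral.integral_ofReal, intervalIntegral.integral_congr fun x _ ↦ hsq_eq x,
    integral_series hT (summable_norm_autocorr ha), autocorr_zero, ← Complex.ofReal_tsum]
  push_cast; ring

lemma integral_norm_pow_four_series (hT : T ≠ 0) (ha : Summable (‖a ·‖)) :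
    ∫ x in (0 : ℝ)..2 * T, ‖series T a x‖ ^ 4 = 2 * T * ∑' n, ‖autocorr a n‖ ^ 2 := by
  rw [← integral_norm_sq_series hT (summable_norm_autocorr ha)]
  refine intervalIntegral.integral_congr fun x _ ↦ ?_
  rw [← series_mul_star ha, norm_mul, norm_star]
  ring

lemma summable_norm_of_summable_weighted (ha : Summable fun j : ℤ ↦ (1 + |(j : ℝ)|) * ‖a j‖) :
    Summable (‖a ·‖) :=
  .of_nonneg_of_le (fun _ ↦ norm_nonneg _)
    (fun j ↦ le_mul_of_one_le_left (norm_nonneg _) (by simp)) ha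

lemma summable_norm_deriv_coeff (ha : Summable fun j : ℤ ↦ (1 + |(j : ℝ)|) * ‖a j‖) :
    Summable fun j : ℤ ↦ ‖Complex.I * j * π / T * a j‖ := by
  refine .of_nonneg_of_le (fun _ ↦ norm_nonneg _) (fun j ↦ ?_) (ha.mul_left (π / |T|))
  rw [norm_mul, norm_I_mul_int_mul_pi_div]
  have : |(j : ℝ)| ≤ 1 + |(j : ℝ)| := by linarith
  calc |(j : ℝ)| * π / |T| * ‖a j‖ = π / |T| * (|(j : ℝ)| * ‖a j‖) := by ring
    _ ≤ π / |T| * ((1 + |(j : ℝ)|) * ‖a j‖) := by gcongr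

lemma hasDerivAt_series (ha : Summable fun j : ℤ ↦ (1 + |(j : ℝ)|) * ‖a j‖) (x : ℝ) :
    HasDerivAt (series T a) (series T (fun j ↦ Complex.I * j * π / T * a j) x) x := by
  refine hasDerivAt_tsum (g := fun j y ↦ a j * mode T j y)
    (g' := fun j y ↦ Complex.I * j * π / T * a j * mode T j y)
    (summable_norm_deriv_coeff (T := T) ha) (fun j y ↦ ?_) (fun j y ↦ ?_)
    (summable_mul_mode (summable_norm_of_summable_weighted ha) 0) x
  · exact ((hasDerivAt_mode T j y).const_mul (a j)).congr_deriv (by ring)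
  · simp

end Series

lemma im_series_eq_zero {T : ℝ} {b : ℤ → ℝ} (hb : ∀ j, b (-j) = b j) (x : ℝ) :
    (series T (fun j ↦ (b j : ℂ)) x).im = 0 := by
  rw [← Complex.conj_eq_iff_im, ← Complex.star_def, star_series]
  simp [hb]

lemma autocorr_ofReal (b : ℤ → ℝ) (n : ℤ) :
    autocorr (fun j ↦ (b j : ℂ)) n = ((∑' k, b (n + k) * b k : ℝ) : ℂ) := by
  simp [autocorr, Complex.ofReal_tsum]

def rearrange (c : ℤ → ℂ) (j : ℤ) : ℝ := √((‖c j‖ ^ 2 + ‖c (-j)‖ ^ 2) / 2)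

section Rearrange

variable {c : ℤ → ℂ}

lemma rearrange_nonneg (j : ℤ) : 0 ≤ rearrange c j := sqrt_nonneg _

lemma rearrange_neg (j : ℤ) : rearrange c (-j) = rearrange c j := by
  simp [rearrange, add_comm]

lemma rearrange_sq (j : ℤ) : rearrange c j ^ 2 = (‖c j‖ ^ 2 + ‖c (-j)‖ ^ 2) / 2 :=
  sq_sqrt (by positivity)

lemma norm_rearrange (j : ℤ) : ‖(rearrange c j : ℂ)‖ = rearrange c j := by
  rw [Complex.norm_real, norm_of_nonneg (rearrange_nonneg j)]

lemma rearrange_le (j : ℤ) : rearrange c j ≤ ‖c j‖ + ‖c (-j)‖ :=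
  sqrt_le_iff.2 ⟨by positivity, by nlinarith [norm_nonneg (c j), norm_nonneg (c (-j))]⟩

/-- Cauchy–Schwarz for the vectors `(‖c j‖, ‖c (-j)‖)` and `(‖c k‖, ‖c (-k)‖)`. -/
lemma average_mul_le_rearrange_mul (j k : ℤ) :
    (‖c j‖ * ‖c k‖ + ‖c (-j)‖ * ‖c (-k)‖) / 2 ≤ rearrange c j * rearrange c k := by
  rw [rearrange, rearrange, ← sqrt_mul (by positivity)]
  exact le_abs_self _ |>.trans <| abs_le_sqrt <| by
    nlinarith [sq_nonneg (‖c j‖ * ‖c (-k)‖ - ‖c (-j)‖ * ‖c k‖)]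

lemma summable_weighted_rearrange {w : ℤ → ℝ} (hw0 : 0 ≤ w) (hw : ∀ j, w (-j) = w j)
    (hc : Summable fun j ↦ w j * ‖c j‖) : Summable fun j ↦ w j * ‖(rearrange c j : ℂ)‖ := by
  have hneg : Summable fun j ↦ w j * ‖c (-j)‖ :=
    ((Equiv.neg ℤ).summable_iff.2 hc).congr fun j ↦ by simp [hw]
  refine .of_nonneg_of_le (fun j ↦ mul_nonneg (hw0 j) (norm_nonneg _)) (fun j ↦ ?_) (hc.add hneg)
  rw [norm_rearrange, ← mul_add]
  exact mul_le_mul_of_nonneg_left (rearrange_le j) (hw0 j)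

lemma tsum_mul_norm_rearrange_sq {w : ℤ → ℝ} (hw : ∀ j, w (-j) = w j)
    (hc : Summable fun j ↦ w j * ‖c j‖ ^ 2) :
    ∑' j, w j * ‖(rearrange c j : ℂ)‖ ^ 2 = ∑' j, w j * ‖c j‖ ^ 2 := by
  rw [tsum_eq_tsum_average (Equiv.neg ℤ) hc]
  refine tsum_congr fun j ↦ ?_
  simp only [norm_rearrange, rearrange_sq, Equiv.neg_apply, hw]
  ring

lemma norm_autocorr_le_norm_autocorr_rearrange (hc : Summable (‖c ·‖)) (n : ℤ) :
    ‖autocorr c n‖ ≤ ‖autocorr (fun j ↦ (rearrange c j : ℂ)) n‖ := by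
  have hprod : Summable fun k ↦ ‖c (n + k)‖ * ‖c k‖ :=
    (summable_mul_shift hc fun _ ↦ norm_nonneg _).prod_factor n
  have hreflect (k : ℤ) :
      ‖c (n + (-n - k))‖ * ‖c (-n - k)‖ = ‖c (-(n + k))‖ * ‖c (-k)‖ := by
    rw [show n + (-n - k) = -k by ring, show -n - k = -(n + k) by ring, mul_comm]
  have hprod_reflect : Summable fun k ↦ ‖c (-(n + k))‖ * ‖c (-k)‖ :=
    ((Equiv.subLeft (-n)).summable_iff.2 hprod).congr hreflect
  have hr : Summable (rearrange c) :=
    .of_nonneg_of_le rearrange_nonneg rearrange_le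
      (hc.add ((Equiv.neg ℤ).summable_iff.2 hc : Summable fun j ↦ ‖c (-j)‖))
  rw [autocorr_ofReal, Complex.norm_real,
    norm_of_nonneg (tsum_nonneg fun k ↦ mul_nonneg (rearrange_nonneg _) (rearrange_nonneg _))]
  calc ‖autocorr c n‖ ≤ ∑' k, ‖c (n + k)‖ * ‖c k‖ := norm_autocorr_le_tsum hc n
    _ = ∑' k, (‖c (n + k)‖ * ‖c k‖ + ‖c (-(n + k))‖ * ‖c (-k)‖) / 2 := by
        rw [tsum_eq_tsum_average (Equiv.subLeft (-n)) hprod]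
        exact tsum_congr fun k ↦ by rw [Equiv.subLeft_apply, hreflect]
    _ ≤ ∑' k, rearrange c (n + k) * rearrange c k :=
        ((hprod.add hprod_reflect).div_const 2).tsum_le_tsum
          (fun k ↦ average_mul_le_rearrange_mul (n + k) k)
          ((summable_mul_shift hr rearrange_nonneg).prod_factor n)

end Rearrange

end FourierRearrangement

end

open FourierRearrangement in
theorem stmt_8_general (T : ℝ) (hT : 0 < T) (c : ℤ → ℂ)
    (hsum : Summable fun j : ℤ => (1 + |(j : ℝ)|) * ‖c j‖)
    (v vt : ℝ → ℂ)
    (hv : ∀ x : ℝ, v x = ∑' j : ℤ, c j * Complex.exp (Complex.I * j * π * x / T))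
    (hvt : ∀ x : ℝ, vt x = ∑' j : ℤ,
      ((Real.sqrt ((‖c j‖^2 + ‖c (-j)‖^2) / 2) : ℝ) : ℂ) *
        Complex.exp (Complex.I * j * π * x / T)) :
    (∀ x : ℝ, (vt x).im = 0) ∧
    (∫ x in (0:ℝ)..(2*T), ‖vt x‖^2) = (∫ x in (0:ℝ)..(2*T), ‖v x‖^2) ∧
    (∫ x in (0:ℝ)..(2*T), ‖deriv vt x‖^2) = (∫ x in (0:ℝ)..(2*T), ‖deriv v x‖^2) ∧
    (∫ x in (0:ℝ)..(2*T), ‖v x‖^4) ≤ (∫ x in (0:ℝ)..(2*T), ‖vt x‖^4) := by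
  obtain rfl : v = series T c := funext hv
  obtain rfl : vt = series T (fun j ↦ (rearrange c j : ℂ)) := funext hvt
  have hsum' : Summable fun j : ℤ ↦ (1 + |(j : ℝ)|) * ‖(rearrange c j : ℂ)‖ :=
    summable_weighted_rearrange (fun _ ↦ by positivity) (fun _ ↦ by simp) hsum
  have hc := summable_norm_of_summable_weighted hsum
  have hr := summable_norm_of_summable_weighted hsum'
  refine ⟨im_series_eq_zero rearrange_neg, ?_, ?_, ?_⟩
  · rw [integral_norm_sq_series hT.ne' hr, integral_norm_sq_series hT.ne' hc]
    congr 1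
    simpa using tsum_mul_norm_rearrange_sq (w := 1) (fun _ ↦ rfl)
      (by simpa using summable_norm_sq_of_summable_norm hc)
  · rw [funext fun x ↦ (hasDerivAt_series (T := T) hsum x).deriv,
      funext fun x ↦ (hasDerivAt_series (T := T) hsum' x).deriv,
      integral_norm_sq_series hT.ne' (summable_norm_deriv_coeff hsum'),
      integral_norm_sq_series hT.ne' (summable_norm_deriv_coeff hsum)]
    simp only [norm_mul, mul_pow]
    rw [tsum_mul_norm_rearrange_sq (fun j ↦ by simp)
      (by simpa [mul_pow] using summable_norm_sq_of_summable_norm (summable_norm_deriv_coeff hsum))]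
  · rw [integral_norm_pow_four_series hT.ne' hc, integral_norm_pow_four_series hT.ne' hr]
    gcongr 2 * T * ?_
    exact (summable_norm_sq_of_summable_norm (summable_norm_autocorr hc)).tsum_le_tsum
      (fun n ↦ pow_le_pow_left₀ (norm_nonneg _) (norm_autocorr_le_norm_autocorr_rearrange hc n) 2)
      (summable_norm_sq_of_summable_norm (summable_norm_autocorr hr))

/-- Fourier rearrangement for anti-periodic functions: given a `T`-anti-periodic
function `v` with (absolutely and `H¹`-summable) Fourier coefficients `c j`
supported on odd indices, the function `ṽ` with real coefficients
`√((|c_j|² + |c_{−j}|²)/2)` is real-valued, has the same `L²` norm and the same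
`L²` norm of the derivative, and at least as large an `L⁴` norm, over one
period of length `2T`. -/
theorem stmt_8 (T : ℝ) (hT : 0 < T) (c : ℤ → ℂ)
    (hodd : ∀ j : ℤ, Even j → c j = 0)
    (hsum : Summable fun j : ℤ => (1 + |(j : ℝ)|) * ‖c j‖)
    (v vt : ℝ → ℂ)
    (hv : ∀ x : ℝ, v x = ∑' j : ℤ, c j * Complex.exp (Complex.I * j * π * x / T))
    (hanti : ∀ x : ℝ, v (x + T) = -v x)
    (hvt : ∀ x : ℝ, vt x = ∑' j : ℤ,
      ((Real.sqrt ((‖c j‖^2 + ‖c (-j)‖^2) / 2) : ℝ) : ℂ) *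
        Complex.exp (Complex.I * j * π * x / T)) :
    (∀ x : ℝ, (vt x).im = 0) ∧
    (∫ x in (0:ℝ)..(2*T), ‖vt x‖^2) = (∫ x in (0:ℝ)..(2*T), ‖v x‖^2) ∧
    (∫ x in (0:ℝ)..(2*T), ‖deriv vt x‖^2) = (∫ x in (0:ℝ)..(2*T), ‖deriv v x‖^2) ∧
    (∫ x in (0:ℝ)..(2*T), ‖v x‖^4) ≤ (∫ x in (0:ℝ)..(2*T), ‖vt x‖^4) :=
  stmt_8_general T hT c hsum v vt hv hvt
end

section
/- Let L be a real symmetric (self-adjoint) operator on a complex Hilbert space that commutes with conjugation, and let J be the block operator with J(f₁,f₂) = (f₂, −f₁) and 𝓛 = diag(L₊, L₋) with L₊, L₋ self-adjoint. If (f₁,f₂) and (g₁,g₂) are eigenvectors of J𝓛 = [[0, L₋],[−L₊, 0]] with eigenvalues λ and μ respectively, and λ + μ̄ ≠ 0, then ⟨f, Jg⟩ = ⟨f, 𝓛g⟩ = 0. If additionally λ − μ̄ ≠ 0, then ⟨f₁, g₂⟩ = ⟨f₂, g₁⟩ = 0. -/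
/-!
Write `a = ⟪f₁, g₂⟫` and `b = ⟪f₂, g₁⟫`. Moving `L₊` and `L₋` across the inner product
turns the eigenvalue equations into the two relations `conj λ * b = μ * a` and
`conj λ * a = μ * b`. Their difference and sum give `(conj λ + μ) (a - b) = 0` and
`(conj λ - μ) (a + b) = 0`, and `⟪f, 𝓛 g⟫ = -μ (a - b)`.
-/

open ComplexConjugate

theorem LinearMap.IsSymmetric.conj_mul_inner_eq {𝕜 E : Type*} [RCLike 𝕜]
    [NormedAddCommGroup E] [InnerProductSpace 𝕜 E] {T : E →ₗ[𝕜] E} (hT : T.IsSymmetric)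
    {x y u v : E} {α β : 𝕜} (hx : T x = α • u) (hy : T y = β • v) :
    conj α * inner 𝕜 u y = β * inner 𝕜 x v := by
  simpa only [hx, hy, inner_smul_left, inner_smul_right] using hT x y

section SwapRelations

variable {R : Type*} [CommRing R] [NoZeroDivisors R] {a b c d : R}

theorem eq_of_mul_eq_mul_swap_of_add_ne_zero (h₁ : c * b = d * a) (h₂ : c * a = d * b)
    (h : c + d ≠ 0) : a = b := by
  have : (c + d) * (a - b) = 0 := by linear_combination h₂ - h₁
  exact sub_eq_zero.mp ((mul_eq_zero.mp this).resolve_left h)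

theorem eq_neg_of_mul_eq_mul_swap_of_sub_ne_zero (h₁ : c * b = d * a) (h₂ : c * a = d * b)
    (h : c - d ≠ 0) : a = -b := by
  have : (c - d) * (a + b) = 0 := by linear_combination h₂ + h₁
  exact eq_neg_of_add_eq_zero_left ((mul_eq_zero.mp this).resolve_left h)

end SwapRelations

/-- Symplectic orthogonality of eigenfunctions of `J𝓛 = [[0, L₋],[−L₊, 0]]`:
if `f = (f₁,f₂)` and `g = (g₁,g₂)` are eigenvectors with eigenvalues `λ`, `μ`
and `λ + μ̄ ≠ 0`, then `⟨f, Jg⟩ = ⟨f, 𝓛g⟩ = 0`; if moreover `λ − μ̄ ≠ 0`,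
then `⟨f₁, g₂⟩ = ⟨f₂, g₁⟩ = 0`. -/
theorem stmt_12 {H : Type*} [NormedAddCommGroup H] [InnerProductSpace ℂ H]
    (Lp Lm : H →ₗ[ℂ] H)
    (hLp : ∀ x y : H, (inner ℂ (Lp x) y : ℂ) = inner ℂ x (Lp y))
    (hLm : ∀ x y : H, (inner ℂ (Lm x) y : ℂ) = inner ℂ x (Lm y))
    (f₁ f₂ g₁ g₂ : H) (lam mu : ℂ)
    (hf1 : Lm f₂ = lam • f₁) (hf2 : -(Lp f₁) = lam • f₂)
    (hg1 : Lm g₂ = mu • g₁) (hg2 : -(Lp g₁) = mu • g₂) :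
    (lam + (starRingEnd ℂ) mu ≠ 0 →
      ((inner ℂ f₁ g₂ : ℂ) - (inner ℂ f₂ g₁ : ℂ) = 0 ∧
       (inner ℂ f₁ (Lp g₁) : ℂ) + (inner ℂ f₂ (Lm g₂) : ℂ) = 0)) ∧
    (lam + (starRingEnd ℂ) mu ≠ 0 → lam - (starRingEnd ℂ) mu ≠ 0 →
      ((inner ℂ f₁ g₂ : ℂ) = 0 ∧ (inner ℂ f₂ g₁ : ℂ) = 0)) := by
  have hLpf : Lp f₁ = (-lam) • f₂ := by rw [neg_smul, ← hf2, neg_neg]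
  have hLpg : Lp g₁ = (-mu) • g₂ := by rw [neg_smul, ← hg2, neg_neg]
  have hLp_rel : conj lam * inner ℂ f₂ g₁ = mu * inner ℂ f₁ g₂ := by
    have h := LinearMap.IsSymmetric.conj_mul_inner_eq hLp hLpf hLpg
    rw [map_neg] at h
    linear_combination -h
  have hLm_rel := LinearMap.IsSymmetric.conj_mul_inner_eq hLm hf1 hg1
  have hab (hp : lam + conj mu ≠ 0) : inner ℂ f₁ g₂ = (inner ℂ f₂ g₁ : ℂ) :=
    eq_of_mul_eq_mul_swap_of_add_ne_zero hLp_rel hLm_rel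
      (by simpa using (map_ne_zero (starRingEnd ℂ)).2 hp)
  have hab_neg (hm : lam - conj mu ≠ 0) : inner ℂ f₁ g₂ = -(inner ℂ f₂ g₁ : ℂ) :=
    eq_neg_of_mul_eq_mul_swap_of_sub_ne_zero hLp_rel hLm_rel
      (by simpa using (map_ne_zero (starRingEnd ℂ)).2 hm)
  refine ⟨fun hp => ⟨sub_eq_zero.mpr (hab hp), ?_⟩, fun hp hm => ⟨?_, ?_⟩⟩
  · rw [hLpg, hg1, inner_smul_right, inner_smul_right, hab hp]
    ring
  · linear_combination (hab hp + hab_neg hm) / 2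
  · linear_combination (hab_neg hm - hab hp) / 2
end

section
/- (Coercivity lemma, part 1) Let L₊, L₋ be self-adjoint operators on a Hilbert space S with J𝓛 = [[0,L₋],[−L₊,0]]. Suppose J𝓛 ξ = iγ ξ for some real γ ≠ 0 and ξ = (ξ₁, ξ₂) with ⟨ξ₁, L₊ξ₁⟩ + ⟨ξ₂, L₋ξ₂⟩ < 0. Suppose moreover L₊ f = −λ f with λ > 0 and L₊ restricted to {f}⊥ is strictly positive. Then L₊ restricted to {ξ₂}⊥ is strictly positive: ⟨h, L₊ h⟩ > 0 for all nonzero h ⊥ ξ₂. -/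
/-!
If `⟪h, L₊h⟫ ≤ 0` for some `h ≠ 0` with `h ⊥ ξ₂`, then, since `L₊ξ₁ = -iγξ₂`, the vectors `h`
and `ξ₁` are `L₊`-orthogonal, so the form `⟪x, L₊x⟫` is nonpositive on their span, and strictly
negative off the line through `h` because `⟪ξ₁, L₊ξ₁⟫ < 0` (the energy `⟪ξ₂, L₋ξ₂⟫` is the
conjugate of `⟪ξ₁, L₊ξ₁⟫`). Unless `h ⊥ f` already, that span meets `{f}⊥` outside this line,
contradicting positivity of `L₊` on `{f}⊥`.
-/

open RCLike

namespace LinearMap.IsSymmetric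

variable {𝕜 E : Type*} [RCLike 𝕜] [NormedAddCommGroup E] [InnerProductSpace 𝕜 E]
  {T : E →ₗ[𝕜] E}

lemma re_inner_add_map_add_of_inner_map_eq_zero (hT : T.IsSymmetric) {x y : E}
    (hxy : inner 𝕜 x (T y) = 0) (s t : 𝕜) :
    re (inner 𝕜 (s • x + t • y) (T (s • x + t • y))) =
      ‖s‖ ^ 2 * re (inner 𝕜 x (T x)) + ‖t‖ ^ 2 * re (inner 𝕜 y (T y)) := by
  have hyx : inner 𝕜 y (T x) = 0 := by
    rw [← hT, ← inner_conj_symm, hxy, map_zero]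
  simp only [map_add, map_smul, inner_add_left, inner_add_right, inner_smul_left,
    inner_smul_right, hxy, hyx, mul_zero, add_zero, zero_add, ← mul_assoc, RCLike.mul_conj]
  simp only [← ofReal_pow, re_ofReal_mul]

lemma re_inner_map_self_pos_of_inner_map_eq_zero (hT : T.IsSymmetric) {f y h : E}
    (hpos : ∀ x, inner 𝕜 f x = 0 → x ≠ 0 → 0 < re (inner 𝕜 x (T x)))
    (hy : re (inner 𝕜 y (T y)) < 0) (hhy : inner 𝕜 h (T y) = 0) (hh : h ≠ 0) :
    0 < re (inner 𝕜 h (T h)) := by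
  by_cases hfh : inner 𝕜 f h = 0
  · exact hpos h hfh hh
  by_contra! hle
  set x := inner 𝕜 f y • h + (-inner 𝕜 f h) • y
  have hfx : inner 𝕜 f x = 0 := by
    simp only [x, inner_add_right, inner_smul_right]
    ring
  have hx_nonneg : 0 ≤ re (inner 𝕜 x (T x)) := by
    rcases eq_or_ne x 0 with hx | hx
    · simp [hx]
    · exact (hpos x hfx hx).le
  have hx_neg : re (inner 𝕜 x (T x)) < 0 := by
    rw [re_inner_add_map_add_of_inner_map_eq_zero hT hhy]
    have : 0 < ‖-inner 𝕜 f h‖ ^ 2 := pow_pos (norm_pos_iff.2 (neg_ne_zero.2 hfh)) 2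
    nlinarith [sq_nonneg ‖inner 𝕜 f y‖]
  exact hx_neg.not_ge hx_nonneg

end LinearMap.IsSymmetric

theorem stmt_14_general {H : Type*} [NormedAddCommGroup H] [InnerProductSpace ℂ H]
    (Lp Lm : H →ₗ[ℂ] H)
    (hLp : ∀ x y : H, (inner ℂ (Lp x) y : ℂ) = inner ℂ x (Lp y))
    (γ : ℝ) (ξ₁ ξ₂ : H)
    (hξ1 : Lm ξ₂ = (Complex.I * γ) • ξ₁)
    (hξ2 : -(Lp ξ₁) = (Complex.I * γ) • ξ₂)
    (hneg : ((inner ℂ ξ₁ (Lp ξ₁) : ℂ) + (inner ℂ ξ₂ (Lm ξ₂) : ℂ)).re < 0)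
    (f : H)
    (hfpos : ∀ h : H, (inner ℂ f h : ℂ) = 0 → h ≠ 0 → 0 < ((inner ℂ h (Lp h) : ℂ)).re) :
    ∀ h : H, (inner ℂ ξ₂ h : ℂ) = 0 → h ≠ 0 → 0 < ((inner ℂ h (Lp h) : ℂ)).re := by
  intro h hperp hne
  have hLpξ₁ : Lp ξ₁ = -((Complex.I * γ) • ξ₂) := by rw [← hξ2, neg_neg]
  have henergy : inner ℂ ξ₂ (Lm ξ₂) = starRingEnd ℂ (inner ℂ ξ₁ (Lp ξ₁)) := by
    rw [hξ1, hLpξ₁, inner_smul_right, inner_neg_right, inner_smul_right, ← inner_conj_symm ξ₁ ξ₂]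
    simp [Complex.conj_ofReal]
  have hξ₁_neg : (inner ℂ ξ₁ (Lp ξ₁) : ℂ).re < 0 := by
    rw [henergy, Complex.add_re, Complex.conj_re] at hneg
    linarith
  have hhξ₁ : inner ℂ h (Lp ξ₁) = (0 : ℂ) := by
    rw [hLpξ₁, inner_neg_right, inner_smul_right, ← inner_conj_symm, hperp, map_zero, mul_zero,
      neg_zero]
  exact LinearMap.IsSymmetric.re_inner_map_self_pos_of_inner_map_eq_zero hLp hfpos hξ₁_neg hhξ₁ hne

/-- Coercivity lemma, part 1: if `J𝓛 = [[0,L₋],[−L₊,0]]` has an eigenvector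
`ξ = (ξ₁,ξ₂)` with purely imaginary nonzero eigenvalue `iγ` and negative
linearized energy, and `L₊` has a one-dimensional negative subspace spanned
by `f` (with `L₊ > 0` on `{f}⊥`), then `L₊ > 0` on `{ξ₂}⊥`. -/
theorem stmt_14 {H : Type*} [NormedAddCommGroup H] [InnerProductSpace ℂ H]
    (Lp Lm : H →ₗ[ℂ] H)
    (hLp : ∀ x y : H, (inner ℂ (Lp x) y : ℂ) = inner ℂ x (Lp y))
    (hLm : ∀ x y : H, (inner ℂ (Lm x) y : ℂ) = inner ℂ x (Lm y))
    (γ : ℝ) (hγ : γ ≠ 0) (ξ₁ ξ₂ : H)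
    (hξ1 : Lm ξ₂ = (Complex.I * γ) • ξ₁)
    (hξ2 : -(Lp ξ₁) = (Complex.I * γ) • ξ₂)
    (hneg : ((inner ℂ ξ₁ (Lp ξ₁) : ℂ) + (inner ℂ ξ₂ (Lm ξ₂) : ℂ)).re < 0)
    (f : H) (hf0 : f ≠ 0) (lam : ℝ) (hlam : 0 < lam)
    (hf : Lp f = (-(lam : ℂ)) • f)
    (hfpos : ∀ h : H, (inner ℂ f h : ℂ) = 0 → h ≠ 0 → 0 < ((inner ℂ h (Lp h) : ℂ)).re) :
    ∀ h : H, (inner ℂ ξ₂ h : ℂ) = 0 → h ≠ 0 → 0 < ((inner ℂ h (Lp h) : ℂ)).re :=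
  stmt_14_general Lp Lm hLp γ ξ₁ ξ₂ hξ1 hξ2 hneg f hfpos
end

section
/- (Coercivity lemma, part 3) Under the hypotheses that both L₊ and L₋ are self-adjoint with exactly one-dimensional negative subspaces (L₊f = −λf, λ>0, L₊|_{f⊥} > 0; L₋g = −νg, ν>0, L₋|_{g⊥} > 0), and that J𝓛 has an eigenvector ξ = (ξ₁,ξ₂) with ⟨ξ, 𝓛ξ⟩ < 0, every eigenvalue ζ of J𝓛 = [[0,L₋],[−L₊,0]] satisfies ζ ∈ iℝ. -/
/-!
A symmetric operator that is positive on the orthogonal complement of a single vector is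
positive on the `L`-orthogonal complement of any vector `w` with `⟪w, L w⟫ < 0`. If `J𝓛` had an
eigenvalue `ζ` off the imaginary axis, its eigenvector would have zero energy, while the
eigenvector `ξ` of negative energy (whose eigenvalue is then imaginary) is symplectically
orthogonal to it; this orthogonality places both components of the new eigenvector in the
positive cones of `L₊` and `L₋`, so its energy would be positive.
-/

open scoped InnerProductSpace ComplexConjugate

section

variable {H : Type*} [NormedAddCommGroup H] [InnerProductSpace ℂ H]

namespace LinearMap.IsSymmetric

variable {L : H →ₗ[ℂ] H}

lemma conj_mul_inner_eq_mul_inner (hL : L.IsSymmetric) {x y u v : H} {a b : ℂ}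
    (hx : L x = a • u) (hy : L y = b • v) : conj a * ⟪u, y⟫_ℂ = b * ⟪x, v⟫_ℂ := by
  have := hL x y
  rwa [hx, hy, inner_smul_left, inner_smul_right] at this

lemma inner_map_sub_smul_self (hL : L.IsSymmetric) {w h : H} (horth : ⟪w, L h⟫_ℂ = 0)
    (c : ℂ) :
    ⟪h - c • w, L (h - c • w)⟫_ℂ = ⟪h, L h⟫_ℂ + Complex.normSq c * ⟪w, L w⟫_ℂ := by
  have horth' : ⟪h, L w⟫_ℂ = 0 := by rw [← hL, ← inner_conj_symm, horth, map_zero]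
  rw [map_sub, map_smul, inner_sub_left, inner_sub_right, inner_sub_right, inner_smul_left,
    inner_smul_right, inner_smul_left, inner_smul_right, horth, horth',
    Complex.normSq_eq_conj_mul_self]
  ring

/-- The vector `h - c • w` with `c = ⟪f, h⟫ / ⟪f, w⟫` lies in `f⊥`, and its energy is
`⟪h, L h⟫ + |c|² ⟪w, L w⟫`, which would be `≤ 0` if `⟪h, L h⟫` were. -/
lemma re_inner_map_self_pos_of_inner_map_eq_zero_s15 (hL : L.IsSymmetric) {f w h : H}
    (hpos : ∀ v : H, ⟪f, v⟫_ℂ = 0 → v ≠ 0 → 0 < (⟪v, L v⟫_ℂ).re)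
    (hw : (⟪w, L w⟫_ℂ).re < 0) (hh : h ≠ 0) (horth : ⟪w, L h⟫_ℂ = 0) :
    0 < (⟪h, L h⟫_ℂ).re := by
  by_contra! hh_nonpos
  have hLw : ⟪w, L w⟫_ℂ ≠ 0 := fun h0 => by simp [h0] at hw
  have hfw : ⟪f, w⟫_ℂ ≠ 0 := fun hfw =>
    (hpos w hfw (by rintro rfl; simp at hw)).not_gt hw
  set c := ⟪f, h⟫_ℂ / ⟪f, w⟫_ℂ
  have hfv : ⟪f, h - c • w⟫_ℂ = 0 := by
    rw [inner_sub_right, inner_smul_right, div_mul_cancel₀ _ hfw, sub_self]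
  have hv : h - c • w ≠ 0 := by
    intro hv
    rw [sub_eq_zero] at hv
    have hc : c * ⟪w, L w⟫_ℂ = 0 := by rw [← inner_smul_right, ← map_smul, ← hv, horth]
    rw [(mul_eq_zero.1 hc).resolve_right hLw, zero_smul] at hv
    exact hh hv
  have := hpos _ hfv hv
  rw [hL.inner_map_sub_smul_self horth, Complex.add_re, Complex.re_ofReal_mul] at this
  nlinarith [Complex.normSq_nonneg c]

end LinearMap.IsSymmetric

section HamiltonianEigen

variable {Lp Lm : H →ₗ[ℂ] H}

lemma ne_zero_and_ne_zero_of_map_eq_smul {ζ : ℂ} {η₁ η₂ : H} (hζ : ζ ≠ 0)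
    (hη : ¬(η₁ = 0 ∧ η₂ = 0)) (hη1 : Lm η₂ = ζ • η₁) (hη2 : -(Lp η₁) = ζ • η₂) :
    η₁ ≠ 0 ∧ η₂ ≠ 0 := by
  constructor
  · rintro rfl
    refine hη ⟨rfl, ?_⟩
    simpa [hζ] using hη2.symm
  · rintro rfl
    refine hη ⟨?_, rfl⟩
    simpa [hζ] using hη1.symm

lemma inner_map_add_inner_map_eq_zero_of_re_ne_zero (hLp : Lp.IsSymmetric)
    (hLm : Lm.IsSymmetric) {ζ : ℂ} {η₁ η₂ : H} (hζ : ζ.re ≠ 0) (hη1 : Lm η₂ = ζ • η₁)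
    (hη2 : -(Lp η₁) = ζ • η₂) :
    ⟪η₁, Lp η₁⟫_ℂ + ⟪η₂, Lm η₂⟫_ℂ = 0 := by
  have hη2' : Lp η₁ = (-ζ) • η₂ := by rw [neg_smul, ← hη2, neg_neg]
  have hm := hLm.conj_mul_inner_eq_mul_inner hη1 hη1
  have hp := hLp.conj_mul_inner_eq_mul_inner hη2' hη2'
  rw [map_neg] at hp
  have hζ' : ζ + conj ζ ≠ 0 := by
    rw [Complex.add_conj]
    exact_mod_cast mul_ne_zero two_ne_zero hζ
  have hsym : ⟪η₂, η₁⟫_ℂ = ⟪η₁, η₂⟫_ℂ := by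
    have : (ζ + conj ζ) * (⟪η₂, η₁⟫_ℂ - ⟪η₁, η₂⟫_ℂ) = 0 := by linear_combination -hm - hp
    exact sub_eq_zero.1 ((mul_eq_zero.1 this).resolve_left hζ')
  rw [hη2', hη1, inner_smul_right, inner_smul_right, hsym]
  ring

lemma inner_cross_eq_zero (hLp : Lp.IsSymmetric) (hLm : Lm.IsSymmetric)
    {μ ζ : ℂ} {ξ₁ ξ₂ η₁ η₂ : H} (hξ1 : Lm ξ₂ = μ • ξ₁) (hξ2 : -(Lp ξ₁) = μ • ξ₂)
    (hη1 : Lm η₂ = ζ • η₁) (hη2 : -(Lp η₁) = ζ • η₂)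
    (hadd : ζ + conj μ ≠ 0) (hsub : ζ - conj μ ≠ 0) :
    ⟪ξ₁, η₂⟫_ℂ = 0 ∧ ⟪ξ₂, η₁⟫_ℂ = 0 := by
  have hξ2' : Lp ξ₁ = (-μ) • ξ₂ := by rw [neg_smul, ← hξ2, neg_neg]
  have hη2' : Lp η₁ = (-ζ) • η₂ := by rw [neg_smul, ← hη2, neg_neg]
  have hm := hLm.conj_mul_inner_eq_mul_inner hξ1 hη1
  have hp := hLp.conj_mul_inner_eq_mul_inner hξ2' hη2'
  rw [map_neg] at hp
  have hplus : (ζ - conj μ) * (⟪ξ₁, η₂⟫_ℂ + ⟪ξ₂, η₁⟫_ℂ) = 0 := by linear_combination -hm + hp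
  have hminus : (ζ + conj μ) * (⟪ξ₂, η₁⟫_ℂ - ⟪ξ₁, η₂⟫_ℂ) = 0 := by linear_combination -hm - hp
  have hp' := (mul_eq_zero.1 hplus).resolve_left hsub
  have hm' := (mul_eq_zero.1 hminus).resolve_left hadd
  constructor
  · linear_combination (hp' - hm') / 2
  · linear_combination (hp' + hm') / 2

lemma inner_map_snd_eq_inner_map_fst (hLm : Lm.IsSymmetric) {μ : ℂ} {ξ₁ ξ₂ : H}
    (hμ : μ.re = 0) (hξ1 : Lm ξ₂ = μ • ξ₁) (hξ2 : -(Lp ξ₁) = μ • ξ₂) :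
    ⟪ξ₂, Lm ξ₂⟫_ℂ = ⟪ξ₁, Lp ξ₁⟫_ℂ := by
  have hm := hLm.conj_mul_inner_eq_mul_inner hξ1 hξ1
  have hconj : conj μ = -μ := Complex.ext (by simp [hμ]) (by simp)
  rw [hconj] at hm
  rw [hξ1, ← neg_neg (Lp ξ₁), hξ2, inner_neg_right, inner_smul_right, inner_smul_right]
  linear_combination -hm

end HamiltonianEigen

end

theorem stmt_15_general {H : Type*} [NormedAddCommGroup H] [InnerProductSpace ℂ H]
    (Lp Lm : H →ₗ[ℂ] H)
    (hLp : ∀ x y : H, (inner ℂ (Lp x) y : ℂ) = inner ℂ x (Lp y))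
    (hLm : ∀ x y : H, (inner ℂ (Lm x) y : ℂ) = inner ℂ x (Lm y))
    (f : H)
    (hfpos : ∀ h : H, (inner ℂ f h : ℂ) = 0 → h ≠ 0 → 0 < ((inner ℂ h (Lp h) : ℂ)).re)
    (g : H)
    (hgpos : ∀ h : H, (inner ℂ g h : ℂ) = 0 → h ≠ 0 → 0 < ((inner ℂ h (Lm h) : ℂ)).re)
    (ξ₁ ξ₂ : H) (mu : ℂ)
    (hξ1 : Lm ξ₂ = mu • ξ₁) (hξ2 : -(Lp ξ₁) = mu • ξ₂)
    (hneg : ((inner ℂ ξ₁ (Lp ξ₁) : ℂ) + (inner ℂ ξ₂ (Lm ξ₂) : ℂ)).re < 0) :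
    ∀ (ζ : ℂ) (η₁ η₂ : H), ¬(η₁ = 0 ∧ η₂ = 0) →
      Lm η₂ = ζ • η₁ → -(Lp η₁) = ζ • η₂ → ζ.re = 0 := by
  intro ζ η₁ η₂ hη hη1 hη2
  by_contra hζ
  have hμ : mu.re = 0 := by
    by_contra hμ
    simp [inner_map_add_inner_map_eq_zero_of_re_ne_zero hLp hLm hμ hξ1 hξ2] at hneg
  have hdiag := inner_map_snd_eq_inner_map_fst hLm hμ hξ1 hξ2
  have hξ₁neg : (⟪ξ₁, Lp ξ₁⟫_ℂ).re < 0 := by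
    rw [Complex.add_re, hdiag] at hneg
    linarith
  obtain ⟨hη₁0, hη₂0⟩ :=
    ne_zero_and_ne_zero_of_map_eq_smul (fun h => hζ (by simp [h])) hη hη1 hη2
  obtain ⟨h₁₂, h₂₁⟩ := inner_cross_eq_zero hLp hLm hξ1 hξ2 hη1 hη2
    (fun h => hζ (by simpa [hμ] using congrArg Complex.re h))
    (fun h => hζ (by simpa [hμ] using congrArg Complex.re h))
  have hpos₁ := LinearMap.IsSymmetric.re_inner_map_self_pos_of_inner_map_eq_zero_s15 hLp hfpos
    hξ₁neg hη₁0 (by rw [← neg_neg (Lp η₁), hη2, inner_neg_right, inner_smul_right, h₁₂]; simp)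
  have hpos₂ := LinearMap.IsSymmetric.re_inner_map_self_pos_of_inner_map_eq_zero_s15 hLm hgpos
    (hdiag ▸ hξ₁neg) hη₂0 (by rw [hη1, inner_smul_right, h₂₁, mul_zero])
  have hzero :=
    congrArg Complex.re (inner_map_add_inner_map_eq_zero_of_re_ne_zero hLp hLm hζ hη1 hη2)
  rw [Complex.add_re, Complex.zero_re] at hzero
  linarith

/-- Coercivity lemma, part 3: if both `L₊` and `L₋` have exactly one-dimensional
negative subspaces and `J𝓛 = [[0,L₋],[−L₊,0]]` has an eigenvector `ξ` with
negative linearized energy, then every eigenvalue of `J𝓛` is purely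
imaginary. -/
theorem stmt_15 {H : Type*} [NormedAddCommGroup H] [InnerProductSpace ℂ H]
    (Lp Lm : H →ₗ[ℂ] H)
    (hLp : ∀ x y : H, (inner ℂ (Lp x) y : ℂ) = inner ℂ x (Lp y))
    (hLm : ∀ x y : H, (inner ℂ (Lm x) y : ℂ) = inner ℂ x (Lm y))
    (f : H) (hf0 : f ≠ 0) (lam : ℝ) (hlam : 0 < lam)
    (hf : Lp f = (-(lam : ℂ)) • f)
    (hfpos : ∀ h : H, (inner ℂ f h : ℂ) = 0 → h ≠ 0 → 0 < ((inner ℂ h (Lp h) : ℂ)).re)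
    (g : H) (hg0 : g ≠ 0) (nu : ℝ) (hnu : 0 < nu)
    (hg : Lm g = (-(nu : ℂ)) • g)
    (hgpos : ∀ h : H, (inner ℂ g h : ℂ) = 0 → h ≠ 0 → 0 < ((inner ℂ h (Lm h) : ℂ)).re)
    (ξ₁ ξ₂ : H) (mu : ℂ)
    (hξ1 : Lm ξ₂ = mu • ξ₁) (hξ2 : -(Lp ξ₁) = mu • ξ₂)
    (hneg : ((inner ℂ ξ₁ (Lp ξ₁) : ℂ) + (inner ℂ ξ₂ (Lm ξ₂) : ℂ)).re < 0) :
    ∀ (ζ : ℂ) (η₁ η₂ : H), ¬(η₁ = 0 ∧ η₂ = 0) →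
      Lm η₂ = ζ • η₁ → -(Lp η₁) = ζ • η₂ → ζ.re = 0 :=
  stmt_15_general Lp Lm hLp hLm f hfpos g hgpos ξ₁ ξ₂ mu hξ1 hξ2 hneg
end
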